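/- If g_1, …, g_n are i.i.d. standard Gumbel random variables (with CDF F(x) = exp(-exp(-x))) and π ∈ Δ^{n-1} with all π_j > 0, then P(argmax_j (log π_j + g_j) = k) = π_k for each k. -/

import Mathlib

/-!
Condition on `g k = t`. By independence, every other `g j` stays below its threshold
`t + log π k - log π j` with probability `∏_{j ≠ k} F (t - log (π j / π k))`, where
`F x = exp (-exp (-x))`; since `F (t - log w) = F t ^ w`, this product is `F t ^ a` with
`a = (1 - π k) / π k`. As `F (g k)` is uniform on `[0, 1]` (probability integral transform),
`𝔼[F (g k) ^ a] = 1 / (a + 1) = π k`.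
-/

open MeasureTheory ProbabilityTheory Set

namespace MeasureTheory.Measure

theorem pi_setOf_forall_add_lt_add {m : ℕ} (ν : Fin (m + 1) → Measure ℝ)
    [∀ i, SigmaFinite (ν i)] (c : Fin (m + 1) → ℝ) (k : Fin (m + 1)) :
    Measure.pi ν {x | ∀ j, j ≠ k → c j + x j < c k + x k} =
      ∫⁻ t, ∏ i, ν (k.succAbove i) (Iio (t + c k - c (k.succAbove i))) ∂ν k := by
  set S : Set (ℝ × (Fin m → ℝ)) := {p | ∀ i, p.2 i < p.1 + c k - c (k.succAbove i)}
  have hS : MeasurableSet S := by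
    simp only [S, ofPred_forall]
    exact .iInter fun i => measurableSet_lt (by fun_prop) (by fun_prop)
  have hpre : {x : Fin (m + 1) → ℝ | ∀ j, j ≠ k → c j + x j < c k + x k} =
      MeasurableEquiv.piFinSuccAbove (fun _ => ℝ) k ⁻¹' S := by
    ext x
    simp only [ne_eq, Fin.forall_iff_succAbove k, not_true_eq_false, lt_self_iff_false, imp_self,
      Fin.succAbove_ne, not_false_eq_true, forall_const, true_and, mem_ofPred_eq,
      MeasurableEquiv.piFinSuccAbove_apply, preimage_ofPred_eq, Fin.insertNthEquiv_symm_apply, S,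
      Fin.removeNth_apply]
    exact forall_congr' fun i => by constructor <;> intro h <;> linarith
  rw [hpre, (measurePreserving_piFinSuccAbove ν k).measure_preimage hS.nullMeasurableSet,
    Measure.prod_apply hS]
  refine lintegral_congr fun t => ?_
  have hsection : Prod.mk t ⁻¹' S = univ.pi fun i => Iio (t + c k - c (k.succAbove i)) := by
    ext y; simp [S]
  rw [hsection, Measure.pi_pi]

end MeasureTheory.Measure

namespace ProbabilityTheory

variable {ν : Measure ℝ}

lemma exists_cdf_eq (hν : Continuous (cdf ν)) {t : ℝ} (ht0 : 0 < t) (ht1 : t < 1) :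
    ∃ x, cdf ν x = t := by
  obtain ⟨a, ha⟩ := ((tendsto_cdf_atBot ν).eventually (ge_mem_nhds ht0)).exists
  obtain ⟨b, hb⟩ := ((tendsto_cdf_atTop ν).eventually (le_mem_nhds ht1)).exists
  exact intermediate_value_univ a b hν ⟨ha, hb⟩

variable [IsProbabilityMeasure ν]

lemma measure_Iio_eq_ofReal_cdf (hν : Continuous (cdf ν)) (x : ℝ) :
    ν (Iio x) = ENNReal.ofReal (cdf ν x) := by
  conv_lhs => rw [← measure_cdf ν]
  rw [(cdf ν).measure_Iio (tendsto_cdf_atBot ν), sub_zero,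
    hν.continuousAt.continuousWithinAt.leftLim_eq]

lemma measure_setOf_cdf_le (hν : Continuous (cdf ν)) {t : ℝ} (ht0 : 0 ≤ t) (ht1 : t < 1) :
    ν {x | cdf ν x ≤ t} = ENNReal.ofReal t := by
  set S := {x | cdf ν x ≤ t}
  rcases S.eq_empty_or_nonempty with hS | hS
  · obtain rfl : t = 0 := by
      refine le_antisymm (not_lt.1 fun ht => ?_) ht0
      obtain ⟨x, hx⟩ := exists_cdf_eq hν ht ht1
      exact hS.subset (hx.le : x ∈ S)
    simp [hS]
  have hbdd : BddAbove S := by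
    obtain ⟨b, hb⟩ :=
      ((tendsto_cdf_atTop ν).eventually (lt_mem_nhds ht1)).exists_forall_of_atTop
    exact ⟨b, fun x hx => not_lt.1 fun hbx => (hb x hbx.le).not_ge hx⟩
  have hs : sSup S ∈ S := (isClosed_le hν continuous_const).csSup_mem hS hbdd
  have hSeq : S = Iic (sSup S) :=
    Subset.antisymm (fun x hx => le_csSup hbdd hx)
      fun x hx => (monotone_cdf ν hx).trans hs
  have hcdf : cdf ν (sSup S) = t := by
    refine le_antisymm hs ?_
    rcases ht0.eq_or_lt with rfl | ht
    · exact cdf_nonneg ν _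
    · obtain ⟨y, rfl⟩ := exists_cdf_eq hν ht ht1
      exact monotone_cdf ν (le_csSup hbdd (le_rfl : cdf ν y ≤ _))
  rw [hSeq, ← ofReal_cdf, hcdf]

theorem map_cdf_eq_restrict_Icc (hν : Continuous (cdf ν)) :
    ν.map (cdf ν) = volume.restrict (Icc 0 1) := by
  have : IsProbabilityMeasure (volume.restrict (Icc (0 : ℝ) 1)) := ⟨by simp⟩
  have : IsProbabilityMeasure (ν.map (cdf ν)) :=
    Measure.isProbabilityMeasure_map hν.measurable.aemeasurable
  refine Measure.ext_of_Iic _ _ fun t => ?_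
  rw [Measure.map_apply hν.measurable measurableSet_Iic,
    Measure.restrict_apply measurableSet_Iic]
  rcases lt_or_ge t 0 with ht0 | ht0
  · have hS : cdf ν ⁻¹' Iic t = ∅ :=
      eq_empty_of_forall_notMem fun x hx => (ht0.trans_le (cdf_nonneg ν x)).not_ge hx
    have hI : Iic t ∩ Icc 0 1 = ∅ :=
      eq_empty_of_forall_notMem fun x hx => (ht0.trans_le hx.2.1).not_ge hx.1
    simp [hS, hI]
  rcases lt_or_ge t 1 with ht1 | ht1
  · have hI : Iic t ∩ Icc 0 1 = Icc 0 t := by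
      ext x
      simp only [mem_inter_iff, mem_Iic, mem_Icc]
      exact ⟨fun h => ⟨h.2.1, h.1⟩, fun h => ⟨h.2, h.1, h.2.trans ht1.le⟩⟩
    exact (measure_setOf_cdf_le hν ht0 ht1).trans (by rw [hI, Real.volume_Icc, sub_zero])
  · have hS : cdf ν ⁻¹' Iic t = univ :=
      eq_univ_of_forall fun x => (cdf_le_one ν x).trans ht1
    have hI : Iic t ∩ Icc 0 1 = Icc 0 1 := inter_eq_right.2 fun x hx => hx.2.trans ht1
    simp [hS, hI]

theorem lintegral_ofReal_cdf_rpow (hν : Continuous (cdf ν)) {a : ℝ} (ha : -1 < a) :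
    ∫⁻ x, ENNReal.ofReal (cdf ν x ^ a) ∂ν = ENNReal.ofReal (1 / (a + 1)) := by
  have hint : IntegrableOn (fun u : ℝ => u ^ a) (Icc 0 1) := by
    rw [integrableOn_Icc_iff_integrableOn_Ioc]
    exact (intervalIntegral.intervalIntegrable_rpow' ha).1
  have hnonneg : 0 ≤ᵐ[volume.restrict (Icc 0 1)] fun u : ℝ => u ^ a := by
    filter_upwards [ae_restrict_mem measurableSet_Icc] with u hu
    exact Real.rpow_nonneg hu.1 a
  rw [← lintegral_map (f := fun u => ENNReal.ofReal (u ^ a)) (by fun_prop) hν.measurable,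
    map_cdf_eq_restrict_Icc hν,
    ← ofReal_integral_eq_lintegral_ofReal hint hnonneg, integral_Icc_eq_integral_Ioc,
    ← intervalIntegral.integral_of_le zero_le_one, integral_rpow (Or.inl ha), Real.one_rpow,
    Real.zero_rpow (by linarith), sub_zero]

lemma cdf_map_eq_of_measure_setOf_le {Ω : Type*} [MeasurableSpace Ω] {μ : Measure Ω}
    [IsProbabilityMeasure μ] {X : Ω → ℝ} (hX : Measurable X) {F : ℝ → ℝ} (hF0 : ∀ x, 0 ≤ F x)
    (hF : ∀ x, μ {ω | X ω ≤ x} = ENNReal.ofReal (F x)) : ⇑(cdf (μ.map X)) = F := by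
  have := Measure.isProbabilityMeasure_map (μ := μ) hX.aemeasurable
  ext x
  rw [cdf_eq_real, measureReal_def, Measure.map_apply hX measurableSet_Iic]
  exact (congrArg ENNReal.toReal (hF x)).trans (ENNReal.toReal_ofReal (hF0 x))

theorem measure_forall_add_lt_add_of_iIndepFun {Ω : Type*} [MeasurableSpace Ω]
    {μ : Measure Ω} [IsProbabilityMeasure μ] {m : ℕ} {g : Fin (m + 1) → Ω → ℝ}
    (hindep : iIndepFun g μ) (hmeas : ∀ j, Measurable (g j)) (c : Fin (m + 1) → ℝ)
    (k : Fin (m + 1)) :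
    μ {ω | ∀ j, j ≠ k → c j + g j ω < c k + g k ω} =
      ∫⁻ t, ∏ i, μ.map (g (k.succAbove i)) (Iio (t + c k - c (k.succAbove i)))
        ∂μ.map (g k) := by
  have hevent :
      MeasurableSet {x : Fin (m + 1) → ℝ | ∀ j, j ≠ k → c j + x j < c k + x k} := by
    simp only [ofPred_forall]
    exact .iInter fun j => .iInter fun _ => measurableSet_lt (by fun_prop) (by fun_prop)
  rw [← Measure.pi_setOf_forall_add_lt_add (fun j => μ.map (g j)),
    ← (iIndepFun_iff_map_fun_eq_pi_map fun j => (hmeas j).aemeasurable).1 hindep,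
    Measure.map_apply (measurable_pi_lambda _ hmeas) hevent]
  rfl

end ProbabilityTheory

section Gumbel

open Real

noncomputable def gumbelCDF (x : ℝ) : ℝ := exp (-exp (-x))

lemma gumbelCDF_pos (x : ℝ) : 0 < gumbelCDF x := exp_pos _

lemma continuous_gumbelCDF : Continuous gumbelCDF := by
  unfold gumbelCDF; fun_prop

lemma gumbelCDF_sub_log (x : ℝ) {w : ℝ} (hw : 0 < w) :
    gumbelCDF (x - log w) = gumbelCDF x ^ w := by
  rw [gumbelCDF, gumbelCDF, ← exp_mul, neg_sub, sub_eq_neg_add, exp_add, exp_log hw]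
  ring_nf

lemma prod_gumbelCDF_sub_log {ι : Type*} (s : Finset ι) {w : ι → ℝ} (hw : ∀ i ∈ s, 0 < w i)
    (x : ℝ) : ∏ i ∈ s, gumbelCDF (x - log (w i)) = gumbelCDF x ^ ∑ i ∈ s, w i := by
  rw [rpow_sum_of_pos (gumbelCDF_pos x)]
  exact Finset.prod_congr rfl fun i hi => gumbelCDF_sub_log x (hw i hi)

theorem lintegral_prod_measure_Iio_add_log_sub_log {ν : Measure ℝ} [IsProbabilityMeasure ν]
    (hν : ⇑(cdf ν) = gumbelCDF) {v : ℝ} (hv : 0 < v) {ι : Type*} (s : Finset ι) {w : ι → ℝ}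
    (hw : ∀ i ∈ s, 0 < w i) :
    ∫⁻ t, ∏ i ∈ s, ν (Iio (t + log v - log (w i))) ∂ν =
      ENNReal.ofReal (v / (v + ∑ i ∈ s, w i)) := by
  have hcont : Continuous (cdf ν) := hν ▸ continuous_gumbelCDF
  have hprod (t : ℝ) : ∏ i ∈ s, ν (Iio (t + log v - log (w i))) =
      ENNReal.ofReal (cdf ν t ^ ((∑ i ∈ s, w i) / v)) := by
    rw [Finset.sum_div, hν, ← prod_gumbelCDF_sub_log s fun i hi => div_pos (hw i hi) hv,
      ENNReal.ofReal_prod_of_nonneg fun i _ => (gumbelCDF_pos _).le]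
    refine Finset.prod_congr rfl fun i hi => ?_
    rw [measure_Iio_eq_ofReal_cdf hcont, hν, log_div (hw i hi).ne' hv.ne', sub_sub_eq_add_sub]
  have hexp : 0 ≤ (∑ i ∈ s, w i) / v :=
    div_nonneg (Finset.sum_nonneg fun i hi => (hw i hi).le) hv.le
  rw [lintegral_congr hprod, lintegral_ofReal_cdf_rpow hcont (neg_one_lt_zero.trans_le hexp),
    div_add_one hv.ne', one_div_div, add_comm]

end Gumbel

/-- The Gumbel-Max trick: if `g 1, …, g n` are i.i.d. standard Gumbel random variables
(CDF `exp (-exp (-x))`) and `π` lies in the simplex with all entries positive, then the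
probability that `log (π k) + g k` is the strict maximum (i.e. the argmax is `k`)
equals `π k`. -/
theorem gumbel_max_trick
    {Ω : Type*} [MeasurableSpace Ω] (μ : Measure Ω) [IsProbabilityMeasure μ]
    (n : ℕ) (π : Fin n → ℝ) (hπpos : ∀ j, 0 < π j) (hπsum : ∑ j, π j = 1)
    (g : Fin n → Ω → ℝ) (hmeas : ∀ j, Measurable (g j))
    (hindep : iIndepFun g μ)
    (hcdf : ∀ j, ∀ x : ℝ,
      μ {ω | g j ω ≤ x} = ENNReal.ofReal (Real.exp (-Real.exp (-x)))) :
    ∀ k : Fin n,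
      μ {ω | ∀ j, j ≠ k → Real.log (π j) + g j ω < Real.log (π k) + g k ω} =
        ENNReal.ofReal (π k) := by
  intro k
  obtain ⟨m, rfl⟩ : ∃ m, n = m + 1 := ⟨n - 1, (Nat.succ_pred_eq_of_pos k.pos).symm⟩
  have hlaw (j) : μ.map (g j) = μ.map (g k) := Measure.ext_of_Iic _ _ fun x => by
    rw [Measure.map_apply (hmeas j) measurableSet_Iic,
      Measure.map_apply (hmeas k) measurableSet_Iic]
    exact (hcdf j x).trans (hcdf k x).symm
  have := Measure.isProbabilityMeasure_map (μ := μ) (hmeas k).aemeasurable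
  rw [measure_forall_add_lt_add_of_iIndepFun hindep hmeas (fun j => Real.log (π j)) k]
  simp_rw [hlaw]
  have hgumbel : ⇑(cdf (μ.map (g k))) = gumbelCDF :=
    cdf_map_eq_of_measure_setOf_le (hmeas k) (fun x => (Real.exp_pos _).le) (hcdf k)
  rw [lintegral_prod_measure_Iio_add_log_sub_log hgumbel (hπpos k) _ fun i _ => hπpos _,
    ← Fin.sum_univ_succAbove π k, hπsum, div_one]
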